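/- arXiv:0811.3819 — 6 statements merged into one kernel-verified Lean document; each statement's English description precedes it below -/
import Mathlib

section
/- Let c ∈ ℂ, let k ≥ 1 be a natural number, and let g : ℂ → ℂ be analytic at c with g(c) ≠ 0. Define f(z) := g(z) · (z − c)⁻ᵏ on a punctured neighborhood of c (so f has a pole of order k at c). Then (z − c)² · MP(f)(z) tends to −k²/(4π²) as z → c within the punctured neighborhood 𝓝[≠] c. In particular MP(f) has a pole of order exactly 2 at c, with quadratic residue −k²/(4π²). -/
open Complex Filter

/-- The Mulase–Penkava density of a function `f : ℂ → ℂ`: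
`MP f z = (1/(4π²)) · (f'(z))² / (f z · (1 − f z))`. -/
noncomputable def MP (f : ℂ → ℂ) (z : ℂ) : ℂ :=
  (1 / (4 * (Real.pi : ℂ) ^ 2)) * (deriv f z) ^ 2 / (f z * (1 - f z))

/-!
Write `(z - c)² · MP f z = (1/(4π²)) · ((z - c) · f'/f)² · f/(1 - f)`. Near `c`,
`f = g · (z - c)⁻ᵏ`, so `(z - c) · f'/f = (z - c) · g'/g - k → -k`; and since `f` has a pole,
`f/(1 - f) → -1`.
-/

open Topology Bornology

theorem MP_eq_logDeriv_sq_mul (f : ℂ → ℂ) (z : ℂ) :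
    MP f z = 1 / (4 * (Real.pi : ℂ) ^ 2) * logDeriv f z ^ 2 * (f z / (1 - f z)) := by
  rw [MP, logDeriv_apply]
  rcases eq_or_ne (f z) 0 with h0 | h0
  · simp [h0]
  rcases eq_or_ne (1 - f z) 0 with h1 | h1
  · simp [h1]
  field_simp

section

variable {𝕜 : Type*} [NontriviallyNormedField 𝕜]

theorem tendsto_div_one_sub_cobounded :
    Tendsto (fun w : 𝕜 => w / (1 - w)) (cobounded 𝕜) (𝓝 (-1)) := by
  have h : Tendsto (fun w : 𝕜 => (w⁻¹ - 1)⁻¹) (cobounded 𝕜) (𝓝 (-1)) := by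
    simpa using ((tendsto_inv₀_cobounded (α := 𝕜)).sub_const 1).inv₀ (by simp)
  refine h.congr' ?_
  filter_upwards [eventually_ne_cobounded 0] with w hw
  rcases eq_or_ne w 1 with rfl | hw1
  · simp
  field_simp [sub_ne_zero.2 hw1.symm]

theorem tendsto_cobounded_of_eventuallyEq_mul_zpow {f g : 𝕜 → 𝕜} {c : 𝕜} {n : ℤ}
    (hg : ContinuousAt g c) (hgc : g c ≠ 0) (hn : n < 0)
    (hf : f =ᶠ[𝓝[≠] c] fun z => g z * (z - c) ^ n) :
    Tendsto f (𝓝[≠] c) (cobounded 𝕜) := by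
  have hpow : Tendsto (fun z => (z - c) ^ n) (𝓝[≠] c) (cobounded 𝕜) := by
    refine (tendsto_zpow_nhdsNE_zero_cobounded hn).comp (tendsto_nhdsWithin_iff.2 ⟨?_, ?_⟩)
    · exact ((continuous_sub_right c).tendsto' c 0 (sub_self c)).mono_left nhdsWithin_le_nhds
    · filter_upwards [self_mem_nhdsWithin] with z hz using sub_ne_zero.2 hz
  rw [← tendsto_norm_atTop_iff_cobounded] at hpow ⊢
  refine Tendsto.congr' (hf.fun_comp norm).symm ?_
  simp only [Function.comp_def, norm_mul]
  exact (hg.norm.tendsto.mono_left nhdsWithin_le_nhds).pos_mul_atTop (norm_pos_iff.2 hgc) hpow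

variable [CompleteSpace 𝕜]

theorem tendsto_sub_mul_logDeriv_of_eventuallyEq_mul_zpow {f g : 𝕜 → 𝕜} {c : 𝕜} {n : ℤ}
    (hg : AnalyticAt 𝕜 g c) (hgc : g c ≠ 0)
    (hf : f =ᶠ[𝓝[≠] c] fun z => g z * (z - c) ^ n) :
    Tendsto (fun z => (z - c) * logDeriv f z) (𝓝[≠] c) (𝓝 n) := by
  have hlog : ∀ᶠ z in 𝓝[≠] c, (z - c) * logDeriv f z = (z - c) * logDeriv g z + n := by
    filter_upwards [eventually_eventually_nhdsWithin.2 hf, self_mem_nhdsWithin,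
      eventually_nhdsWithin_of_eventually_nhds hg.eventually_analyticAt,
      eventually_nhdsWithin_of_eventually_nhds (hg.continuousAt.eventually_ne hgc)]
      with z hf_near hz hgz hgz0
    have hzc : z - c ≠ 0 := sub_ne_zero.2 hz
    have hfz : f =ᶠ[𝓝 z] fun z => g z * (z - c) ^ n := by
      rwa [isOpen_compl_singleton.nhdsWithin_eq hz] at hf_near
    rw [logDeriv, Pi.div_apply, hfz.deriv_eq, hfz.eq_of_nhds, ← logDeriv_apply,
      logDeriv_mul (g := fun z => (z - c) ^ n) z hgz0 (zpow_ne_zero n hzc) hgz.differentiableAt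
        (by fun_prop (disch := exact .inl hzc)),
      logDeriv_fun_zpow (by fun_prop), logDeriv_apply (fun z => z - c), deriv_sub_const,
      deriv_id'']
    field_simp
  have hcont : ContinuousAt (fun z => (z - c) * logDeriv g z + n) c := by
    have : ContinuousAt (logDeriv g) c := hg.deriv.continuousAt.div hg.continuousAt hgc
    fun_prop
  refine Tendsto.congr' (EventuallyEq.symm hlog) ?_
  simpa using hcont.tendsto.mono_left nhdsWithin_le_nhds

end

/-- If `f` has a pole of order `k ≥ 1` at `c` (i.e. `f z = g z · (z − c)⁻ᵏ` on a punctured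
neighborhood of `c`, with `g` analytic at `c` and `g c ≠ 0`), then `(z − c)² · MP f z`
tends to `−k²/(4π²)` as `z → c` within `𝓝[≠] c`: the quadratic residue of `MP f` at its
double pole `c` is `−k²/(4π²)`. -/
theorem stmt_1 (c : ℂ) (k : ℕ) (hk : 1 ≤ k) (g f : ℂ → ℂ)
    (hg : AnalyticAt ℂ g c) (hgc : g c ≠ 0)
    (hf : ∀ᶠ z in nhdsWithin c {c}ᶜ, f z = g z * ((z - c) ^ k)⁻¹) :
    Tendsto (fun z => (z - c) ^ 2 * MP f z) (nhdsWithin c {c}ᶜ)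
      (nhds (-(k : ℂ) ^ 2 / (4 * (Real.pi : ℂ) ^ 2))) := by
  have hf' : f =ᶠ[𝓝[≠] c] fun z => g z * (z - c) ^ (-k : ℤ) := by
    simp only [EventuallyEq, zpow_neg, zpow_natCast]
    exact hf
  have hlog := tendsto_sub_mul_logDeriv_of_eventuallyEq_mul_zpow hg hgc hf'
  have hpole := tendsto_div_one_sub_cobounded.comp
    (tendsto_cobounded_of_eventuallyEq_mul_zpow hg.continuousAt hgc (by omega) hf')
  have hlim := ((tendsto_const_nhds (x := 1 / (4 * (Real.pi : ℂ) ^ 2))).mul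
    (hlog.pow 2)).mul hpole
  convert hlim using 2 with z
  · simp only [MP_eq_logDeriv_sq_mul, Function.comp_apply]
    ring
  · push_cast
    ring
end

section
/- Let c ∈ ℂ, let a ≥ 1 be a natural number, and let g : ℂ → ℂ be analytic at c with g(c) ≠ 0. Define f(z) := (z − c)ᵃ · g(z) near c (so f has a zero of order a at c). Then (z − c)² · MP(f)(z) / (z − c)ᵃ tends to a² · g(c)/(4π²) as z → c within the punctured neighborhood 𝓝[≠] c; since a² g(c)/(4π²) ≠ 0, the quadratic differential MP(f) has order exactly a − 2 at c. -/
open Complex Filter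

open Topology

/-! Writing `f = (z - c)ᵃ g`, one has `(z - c) f' = (z - c)ᵃ (a g + (z - c) g')`, so off `c` the
quotient equals `(a g + (z - c) g')² / (4π² g (1 - f))`. This is continuous at `c`, because
`g (c) ≠ 0` and `f (c) = 0`, and its value there is `a² g(c) / (4π²)`. -/

theorem sub_mul_deriv_sub_pow_mul {𝕜 : Type*} [NontriviallyNormedField 𝕜] {g : 𝕜 → 𝕜}
    {c z : 𝕜} (a : ℕ) (hg : DifferentiableAt 𝕜 g z) :
    (z - c) * deriv (fun w => (w - c) ^ a * g w) z =
      (z - c) ^ a * (a * g z + (z - c) * deriv g z) := by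
  have hpow : HasDerivAt (fun w => (w - c) ^ a) (a * (z - c) ^ (a - 1) * 1) z :=
    ((hasDerivAt_id z).sub_const c).pow a
  have hprod : HasDerivAt (fun w => (w - c) ^ a * g w)
      (a * (z - c) ^ (a - 1) * 1 * g z + (z - c) ^ a * deriv g z) z :=
    hpow.mul hg.hasDerivAt
  rw [hprod.deriv]
  rcases Nat.eq_zero_or_pos a with rfl | ha
  · simp
  · obtain ⟨n, rfl⟩ := Nat.exists_eq_add_of_lt ha
    simp only [zero_add, Nat.add_sub_cancel, pow_succ]
    ring

theorem sq_mul_MP_div_eq {f : ℂ → ℂ} {z w p G H : ℂ} (hp : p ≠ 0) (hf : f z = p * G)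
    (hdf : w * deriv f z = p * H) :
    w ^ 2 * MP f z / p = 1 / (4 * (Real.pi : ℂ) ^ 2) * H ^ 2 / (G * (1 - f z)) := by
  have hsq : w ^ 2 * deriv f z ^ 2 = p ^ 2 * H ^ 2 := by rw [← mul_pow, hdf, mul_pow]
  rw [MP, hf]
  generalize 1 / (4 * (Real.pi : ℂ) ^ 2) = C
  generalize 1 - p * G = u
  rw [show w ^ 2 * (C * deriv f z ^ 2 / (p * G * u)) / p =
      C * (w ^ 2 * deriv f z ^ 2) / (p ^ 2 * (G * u)) by ring, hsq,
    show C * (p ^ 2 * H ^ 2) = p ^ 2 * (C * H ^ 2) by ring, mul_div_mul_left _ _ (pow_ne_zero 2 hp)]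

theorem tendsto_mul_sq_div_mul_one_sub {f g H : ℂ → ℂ} {c C L : ℂ}
    (hH : Tendsto H (𝓝 c) (𝓝 L)) (hg : ContinuousAt g c) (hgc : g c ≠ 0)
    (hf : Tendsto f (𝓝 c) (𝓝 0)) :
    Tendsto (fun z => C * H z ^ 2 / (g z * (1 - f z))) (𝓝 c) (𝓝 (C * L ^ 2 / g c)) := by
  have h := ((hH.pow 2).const_mul C).div (hg.tendsto.mul (hf.const_sub 1)) (by simpa using hgc)
  rw [sub_zero, mul_one] at h
  exact h

/-- If `f` has a zero of order `a ≥ 1` at `c` (i.e. `f z = (z − c)ᵃ · g z` near `c`, with `g`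
analytic at `c` and `g c ≠ 0`), then `(z − c)² · MP f z / (z − c)ᵃ` tends to
`a² · g c / (4π²) ≠ 0` as `z → c` within `𝓝[≠] c`, so `MP f` has order exactly `a − 2`
at `c`. -/
theorem stmt_2 (c : ℂ) (a : ℕ) (ha : 1 ≤ a) (g f : ℂ → ℂ)
    (hg : AnalyticAt ℂ g c) (hgc : g c ≠ 0)
    (hf : ∀ᶠ z in nhds c, f z = (z - c) ^ a * g z) :
    Tendsto (fun z => (z - c) ^ 2 * MP f z / (z - c) ^ a) (nhdsWithin c {c}ᶜ)
      (nhds ((a : ℂ) ^ 2 * g c / (4 * (Real.pi : ℂ) ^ 2))) ∧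
    (a : ℂ) ^ 2 * g c / (4 * (Real.pi : ℂ) ^ 2) ≠ 0 := by
  have hpi : (4 * (Real.pi : ℂ) ^ 2) ≠ 0 := by simp [Real.pi_ne_zero]
  have ha0 : (a : ℂ) ≠ 0 := Nat.cast_ne_zero.2 (by omega)
  refine ⟨?_, div_ne_zero (mul_ne_zero (pow_ne_zero 2 ha0) hgc) hpi⟩
  have hsub : Tendsto (fun z => z - c) (𝓝 c) (𝓝 0) :=
    (continuous_sub_right c).tendsto' c 0 (sub_self c)
  have hf0 : Tendsto f (𝓝 c) (𝓝 0) := by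
    have h := (hsub.pow a).mul hg.continuousAt.tendsto
    rw [zero_pow (by omega), zero_mul] at h
    exact h.congr' (EventuallyEq.symm hf)
  have hH : Tendsto (fun z => a * g z + (z - c) * deriv g z) (𝓝 c) (𝓝 (a * g c)) := by
    have h := (hg.continuousAt.tendsto.const_mul (a : ℂ)).add
      (hsub.mul hg.deriv.continuousAt.tendsto)
    rwa [zero_mul, add_zero] at h
  have hlim := tendsto_mul_sq_div_mul_one_sub (C := 1 / (4 * (Real.pi : ℂ) ^ 2))
    hH hg.continuousAt hgc hf0
  rw [show 1 / (4 * (Real.pi : ℂ) ^ 2) * (a * g c) ^ 2 / g c =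
      a ^ 2 * g c / (4 * (Real.pi : ℂ) ^ 2) by field_simp] at hlim
  refine (hlim.mono_left nhdsWithin_le_nhds).congr' ?_
  filter_upwards [eventually_nhdsWithin_of_eventually_nhds hf.eventually_nhds,
    eventually_nhdsWithin_of_eventually_nhds hg.eventually_analyticAt,
    self_mem_nhdsWithin] with z hfz hgz hzc
  have hfz : f =ᶠ[𝓝 z] fun w => (w - c) ^ a * g w := hfz
  refine (sq_mul_MP_div_eq (pow_ne_zero a (sub_ne_zero.2 hzc)) hfz.eq_of_nhds ?_).symm
  rw [hfz.deriv_eq]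
  exact sub_mul_deriv_sub_pow_mul a hgz.differentiableAt
end

section
/- Let c ∈ ℂ and let g : ℂ → ℂ be analytic at c with g(c) ≠ 0. Define f(z) := 1 + (z − c)² · g(z) near c (so f − 1 has a double zero at c, as at a ramification point of a clean Belyi function over 1). Then MP(f)(z) tends to −g(c)/π² as z → c within the punctured neighborhood 𝓝[≠] c; since −g(c)/π² ≠ 0, the quadratic differential MP(f) extends holomorphically to c and is nonzero there (it has order exactly 0 at c). -/
/-! Writing `f = 1 + (z - c)² g`, both `(f')²` and `f (1 - f)` carry the factor `(z - c)²`.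
Cancelling it leaves `(2 g + (z - c) g')² / (4π² · (-g) (1 + (z - c)² g))`, which is continuous
at `c` with value `4 g(c)² / (-4π² g(c)) = -g(c)/π²`. -/

open Complex Filter Topology

noncomputable def MPRegularPart (g : ℂ → ℂ) (c z : ℂ) : ℂ :=
  1 / (4 * (Real.pi : ℂ) ^ 2) * (2 * g z + (z - c) * deriv g z) ^ 2 /
    (-g z * (1 + (z - c) ^ 2 * g z))

theorem hasDerivAt_one_add_sub_sq_mul {g : ℂ → ℂ} {c z : ℂ} (hg : DifferentiableAt ℂ g z) :
    HasDerivAt (fun w => 1 + (w - c) ^ 2 * g w)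
      ((z - c) * (2 * g z + (z - c) * deriv g z)) z := by
  have hsq : HasDerivAt (fun w : ℂ => (w - c) ^ 2) (2 * (z - c)) z := by
    simpa using ((hasDerivAt_id z).sub_const c).fun_pow 2
  exact ((hsq.fun_mul hg.hasDerivAt).const_add 1).congr_deriv (by ring)

theorem MP_eq_of_eq_one_add_sub_sq_mul {f g : ℂ → ℂ} {c z D : ℂ} (hz : z ≠ c)
    (hfz : f z = 1 + (z - c) ^ 2 * g z) (hf'z : deriv f z = (z - c) * D) :
    MP f z = 1 / (4 * (Real.pi : ℂ) ^ 2) * D ^ 2 / (-g z * (1 + (z - c) ^ 2 * g z)) := by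
  have hden : f z * (1 - f z) = (z - c) ^ 2 * (-g z * (1 + (z - c) ^ 2 * g z)) := by
    rw [hfz]; ring
  rw [MP, hden, hf'z, mul_pow, mul_left_comm,
    mul_div_mul_left _ _ (pow_ne_zero 2 (sub_ne_zero.2 hz))]

theorem MP_eventuallyEq_MPRegularPart {f g : ℂ → ℂ} {c : ℂ}
    (hg : ∀ᶠ z in 𝓝 c, DifferentiableAt ℂ g z)
    (hf : f =ᶠ[𝓝 c] fun z => 1 + (z - c) ^ 2 * g z) :
    MP f =ᶠ[𝓝[≠] c] MPRegularPart g c := by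
  have hf' : ∀ᶠ z in 𝓝 c, deriv f z = (z - c) * (2 * g z + (z - c) * deriv g z) := by
    filter_upwards [hf.deriv, hg] with z hfz hgz
    rw [hfz, (hasDerivAt_one_add_sub_sq_mul hgz).deriv]
  filter_upwards [nhdsWithin_le_nhds hf, nhdsWithin_le_nhds hf', self_mem_nhdsWithin]
    with z hfz hf'z hz
  exact MP_eq_of_eq_one_add_sub_sq_mul hz hfz hf'z

theorem tendsto_MPRegularPart {g : ℂ → ℂ} {c : ℂ} (hg : ContinuousAt g c)
    (hg' : ContinuousAt (deriv g) c) (hgc : g c ≠ 0) :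
    Tendsto (MPRegularPart g c) (𝓝 c) (𝓝 (-g c / (Real.pi : ℂ) ^ 2)) := by
  have hcont : ContinuousAt (MPRegularPart g c) c :=
    ContinuousAt.div (by fun_prop) (by fun_prop) (by simp [hgc])
  convert hcont.tendsto using 2
  have hπ : (Real.pi : ℂ) ≠ 0 := ofReal_ne_zero.2 Real.pi_ne_zero
  simp only [MPRegularPart, sub_self]
  field_simp
  ring

/-- If `f − 1` has a double zero at `c` (i.e. `f z = 1 + (z − c)² · g z` near `c`, with `g`
analytic at `c` and `g c ≠ 0`), as at a ramification point over `1` of a clean Belyi function,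
then `MP f z` tends to `−g c / π² ≠ 0` as `z → c` within `𝓝[≠] c`: the quadratic
differential `MP f` extends holomorphically to `c` and is nonzero there. -/
theorem stmt_3 (c : ℂ) (g f : ℂ → ℂ)
    (hg : AnalyticAt ℂ g c) (hgc : g c ≠ 0)
    (hf : ∀ᶠ z in nhds c, f z = 1 + (z - c) ^ 2 * g z) :
    Tendsto (fun z => MP f z) (nhdsWithin c {c}ᶜ)
      (nhds (-(g c) / (Real.pi : ℂ) ^ 2)) ∧
    -(g c) / (Real.pi : ℂ) ^ 2 ≠ 0 := by
  have hg_diff : ∀ᶠ z in 𝓝 c, DifferentiableAt ℂ g z :=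
    hg.eventually_analyticAt.mono fun _ hz => hz.differentiableAt
  refine ⟨?_, div_ne_zero (neg_ne_zero.2 hgc) (pow_ne_zero 2 (ofReal_ne_zero.2 Real.pi_ne_zero))⟩
  exact ((tendsto_MPRegularPart hg.continuousAt hg.deriv.continuousAt hgc).mono_left
    nhdsWithin_le_nhds).congr' (MP_eventuallyEq_MPRegularPart hg_diff hf).symm
end

section
/- Let c₁, c₂ ∈ ℂ with c₁ ≠ c₂, and let g₁, g₂ : ℂ → ℂ be analytic at c₁, c₂ respectively with g₁(c₁) ≠ 0 and g₂(c₂) ≠ 0. Suppose f : ℂ → ℂ satisfies f(z) = g₁(z)·(z − c₁)⁻⁷ on a punctured neighborhood of c₁ and f(z) = g₂(z)·(z − c₂)⁻¹ on a punctured neighborhood of c₂ (poles of order 7 and 1). Then the quadratic residues of MP(f) at c₁ and c₂ are −49/(4π²) and −1/(4π²) respectively; in particular their ratio equals 49. -/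
open Complex Filter

/-!
Write `(z - c)² · MP f = (1/(4π²)) · ((z - c) f'/f)² · f/(1 - f)`. At a pole `f = g · (z - c)⁻ⁿ`
of order `n ≥ 1` the logarithmic derivative is `g'/g - n/(z - c)`, so `(z - c) f'/f → -n`, while
`f → ∞` gives `f/(1 - f) → -1`. Hence the quadratic residue of `MP f` at `c` is `-n²/(4π²)`.
-/

open Topology

section Pole

variable {𝕜 : Type*} [NontriviallyNormedField 𝕜] {f g : 𝕜 → 𝕜} {c z : 𝕜} {n : ℕ}

theorem logDeriv_mul_inv_sub_pow (hgd : DifferentiableAt 𝕜 g z) (hgz : g z ≠ 0) (hz : z ≠ c) :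
    logDeriv (fun w => g w * ((w - c) ^ n)⁻¹) z = logDeriv g z - n / (z - c) := by
  have hzc : z - c ≠ 0 := sub_ne_zero.2 hz
  simp_rw [← zpow_natCast, ← zpow_neg]
  rw [logDeriv_mul (g := fun w => (w - c) ^ (-(n : ℤ))) z hgz (zpow_ne_zero _ hzc) hgd
      (by fun_prop (disch := exact .inl hzc)), logDeriv_fun_zpow (by fun_prop)]
  have hsub : logDeriv (fun w => w - c) z = 1 / (z - c) := by simp [logDeriv_apply]
  rw [hsub]
  push_cast
  ring

theorem tendsto_sub_mul_logDeriv_of_eventuallyEq_mul_inv_pow [CompleteSpace 𝕜]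
    (hg : AnalyticAt 𝕜 g c) (hgc : g c ≠ 0)
    (hf : ∀ᶠ z in 𝓝[≠] c, f z = g z * ((z - c) ^ n)⁻¹) :
    Tendsto (fun z => (z - c) * logDeriv f z) (𝓝[≠] c) (𝓝 (-n)) := by
  have hcont : ContinuousAt (fun z => (z - c) * logDeriv g z - n) c := by
    have hg' : ContinuousAt (deriv g) c := hg.deriv.continuousAt
    exact ((continuousAt_id.sub continuousAt_const).mul
      (hg'.div hg.continuousAt hgc)).sub continuousAt_const
  have hlim : Tendsto (fun z => (z - c) * logDeriv g z - n) (𝓝[≠] c) (𝓝 (-n)) := by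
    simpa using hcont.continuousWithinAt.tendsto
  refine hlim.congr' ?_
  filter_upwards [logDeriv_congr_nhdsNE hf,
    (hg.eventually_analyticAt.and (hg.continuousAt.eventually_ne hgc)).filter_mono
      nhdsWithin_le_nhds, self_mem_nhdsWithin] with z hlog ⟨hgz, hgz0⟩ hz
  rw [hlog, logDeriv_mul_inv_sub_pow hgz.differentiableAt hgz0 hz]
  field_simp [sub_ne_zero.2 hz]

theorem tendsto_div_one_sub_of_eventuallyEq_mul_inv_pow (hn : n ≠ 0)
    (hg : ContinuousAt g c) (hgc : g c ≠ 0)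
    (hf : ∀ᶠ z in 𝓝[≠] c, f z = g z * ((z - c) ^ n)⁻¹) :
    Tendsto (fun z => f z / (1 - f z)) (𝓝[≠] c) (𝓝 (-1)) := by
  have hcont : ContinuousAt (fun z => g z / ((z - c) ^ n - g z)) c :=
    hg.div (by fun_prop) (by simpa [zero_pow hn] using hgc)
  have hlim : Tendsto (fun z => g z / ((z - c) ^ n - g z)) (𝓝[≠] c) (𝓝 (-1)) := by
    simpa [zero_pow hn, hgc] using hcont.continuousWithinAt.tendsto
  refine hlim.congr' ?_
  filter_upwards [hf, self_mem_nhdsWithin] with z hfz hz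
  have hzc : (z - c) ^ n ≠ 0 := pow_ne_zero _ (sub_ne_zero.2 hz)
  rw [hfz]
  field_simp

end Pole

theorem sq_sub_mul_MP_eq (f : ℂ → ℂ) (c z : ℂ) :
    (z - c) ^ 2 * MP f z =
      1 / (4 * (Real.pi : ℂ) ^ 2) * ((z - c) * logDeriv f z) ^ 2 * (f z / (1 - f z)) := by
  rcases eq_or_ne (f z) 0 with hf | hf
  · simp [MP, hf]
  rw [MP, logDeriv_apply]
  field_simp

theorem tendsto_sq_sub_mul_MP_of_eventuallyEq_mul_inv_pow {f g : ℂ → ℂ} {c : ℂ} {n : ℕ}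
    (hn : n ≠ 0) (hg : AnalyticAt ℂ g c) (hgc : g c ≠ 0)
    (hf : ∀ᶠ z in 𝓝[≠] c, f z = g z * ((z - c) ^ n)⁻¹) :
    Tendsto (fun z => (z - c) ^ 2 * MP f z) (𝓝[≠] c)
      (𝓝 (-(n : ℂ) ^ 2 / (4 * (Real.pi : ℂ) ^ 2))) := by
  simp_rw [sq_sub_mul_MP_eq]
  convert (((tendsto_sub_mul_logDeriv_of_eventuallyEq_mul_inv_pow hg hgc hf).pow 2).const_mul
    (1 / (4 * (Real.pi : ℂ) ^ 2))).mul
    (tendsto_div_one_sub_of_eventuallyEq_mul_inv_pow hn hg.continuousAt hgc hf) using 2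
  ring

theorem stmt_4_general (c₁ c₂ : ℂ) (g₁ g₂ f : ℂ → ℂ)
    (hg₁ : AnalyticAt ℂ g₁ c₁) (hg₁c : g₁ c₁ ≠ 0)
    (hg₂ : AnalyticAt ℂ g₂ c₂) (hg₂c : g₂ c₂ ≠ 0)
    (hf₁ : ∀ᶠ z in nhdsWithin c₁ {c₁}ᶜ, f z = g₁ z * ((z - c₁) ^ 7)⁻¹)
    (hf₂ : ∀ᶠ z in nhdsWithin c₂ {c₂}ᶜ, f z = g₂ z * ((z - c₂) ^ 1)⁻¹) :
    Tendsto (fun z => (z - c₁) ^ 2 * MP f z) (nhdsWithin c₁ {c₁}ᶜ)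
      (nhds (-49 / (4 * (Real.pi : ℂ) ^ 2))) ∧
    Tendsto (fun z => (z - c₂) ^ 2 * MP f z) (nhdsWithin c₂ {c₂}ᶜ)
      (nhds (-1 / (4 * (Real.pi : ℂ) ^ 2))) ∧
    (-49 / (4 * (Real.pi : ℂ) ^ 2)) / (-1 / (4 * (Real.pi : ℂ) ^ 2)) = 49 := by
  refine ⟨?_, ?_, ?_⟩
  · convert tendsto_sq_sub_mul_MP_of_eventuallyEq_mul_inv_pow (by norm_num) hg₁ hg₁c hf₁
      using 3
    norm_num
  · convert tendsto_sq_sub_mul_MP_of_eventuallyEq_mul_inv_pow one_ne_zero hg₂ hg₂c hf₂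
      using 3
    norm_num
  · have hpi : (4 : ℂ) * (Real.pi : ℂ) ^ 2 ≠ 0 := by simp [Real.pi_ne_zero]
    field_simp

/-- If `f` has poles of orders `7` and `1` at `c₁ ≠ c₂` (with analytic nonvanishing units
`g₁, g₂`), then the quadratic residues of `MP f` at `c₁` and `c₂` are `−49/(4π²)` and
`−1/(4π²)` respectively; in particular their ratio is `49`. -/
theorem stmt_4 (c₁ c₂ : ℂ) (hc : c₁ ≠ c₂) (g₁ g₂ f : ℂ → ℂ)
    (hg₁ : AnalyticAt ℂ g₁ c₁) (hg₁c : g₁ c₁ ≠ 0)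
    (hg₂ : AnalyticAt ℂ g₂ c₂) (hg₂c : g₂ c₂ ≠ 0)
    (hf₁ : ∀ᶠ z in nhdsWithin c₁ {c₁}ᶜ, f z = g₁ z * ((z - c₁) ^ 7)⁻¹)
    (hf₂ : ∀ᶠ z in nhdsWithin c₂ {c₂}ᶜ, f z = g₂ z * ((z - c₂) ^ 1)⁻¹) :
    Tendsto (fun z => (z - c₁) ^ 2 * MP f z) (nhdsWithin c₁ {c₁}ᶜ)
      (nhds (-49 / (4 * (Real.pi : ℂ) ^ 2))) ∧
    Tendsto (fun z => (z - c₂) ^ 2 * MP f z) (nhdsWithin c₂ {c₂}ᶜ)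
      (nhds (-1 / (4 * (Real.pi : ℂ) ^ 2))) ∧
    (-49 / (4 * (Real.pi : ℂ) ^ 2)) / (-1 / (4 * (Real.pi : ℂ) ^ 2)) = 49 :=
  stmt_4_general c₁ c₂ g₁ g₂ f hg₁ hg₁c hg₂ hg₂c hf₁ hf₂
end

section
/- Let γ ∈ ℂ satisfy γ² = 212625 (i.e. γ = ±45√105). In the polynomial ring ℂ[x] define f := 420 x³ − (119 + 9γ) x² + 14(1515 − γ) x + 420(420 − γ), N₀ := 343(39γ + 17983)·(x + 5)³·(x − 3)⁵, N₁ := (343(39γ + 17983)/196)·(14 x⁴ − 420 x² + 560 x + 135γ − 60825)², and D := 15552000·(64 x − 105 + γ). Then there exists a polynomial R ∈ ℂ[x] such that (N₀ − N₁)² − 2·D·(N₀ + N₁) + D² = 4·f·R². (This identity certifies that Q² := ((n₀ − n₁)² − 2(n₀ + n₁) + 1)/(4f), with n₀ = N₀/D and n₁ = N₁/D, is the square of a rational function, so that β := (n₀ − n₁ + 1)/2 + y·Q is a well-defined function on the curve y² = f(x) with β·β̄ = n₀ and (β − 1)(β̄ − 1) = n₁.) -/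
open Polynomial

/-- For `γ² = 212625`, with `f = 420x³ − (119+9γ)x² + 14(1515−γ)x + 420(420−γ)`,
`N₀ = 343(39γ+17983)(x+5)³(x−3)⁵`, `N₁ = (343(39γ+17983)/196)(14x⁴−420x²+560x+135γ−60825)²`
and `D = 15552000(64x − 105 + γ)`, the polynomial `(N₀ − N₁)² − 2D(N₀ + N₁) + D²` equals
`4·f·R²` for some `R ∈ ℂ[x]`: the quantity `((n₀−n₁)² − 2(n₀+n₁) + 1)/(4f)` is the square
of a rational function, so the Belyi function `β` is well defined on the curve `y² = f(x)`. -/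
theorem stmt_10 (γ : ℂ) (hγ : γ ^ 2 = 212625) :
    ∃ R : Polynomial ℂ,
      ((C (343 * (39 * γ + 17983)) * (X + C 5) ^ 3 * (X - C 3) ^ 5
          - C (343 * (39 * γ + 17983) / 196)
              * (C 14 * X ^ 4 - C 420 * X ^ 2 + C 560 * X + C (135 * γ - 60825)) ^ 2) ^ 2
        - 2 * (C 15552000 * (C 64 * X - C 105 + C γ))
            * (C (343 * (39 * γ + 17983)) * (X + C 5) ^ 3 * (X - C 3) ^ 5
              + C (343 * (39 * γ + 17983) / 196)
                  * (C 14 * X ^ 4 - C 420 * X ^ 2 + C 560 * X + C (135 * γ - 60825)) ^ 2)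
        + (C 15552000 * (C 64 * X - C 105 + C γ)) ^ 2)
      = 4 * (C 420 * X ^ 3 - C (119 + 9 * γ) * X ^ 2 + C (14 * (1515 - γ)) * X
              + C (420 * (420 - γ))) * R ^ 2 := by
  have hs2 : (((-14617503129600 - 31701196800 * γ : ℂ)) ^ ((2 : ℂ)⁻¹)) ^ (2 : ℕ)
      = -14617503129600 - 31701196800 * γ :=
    Complex.cpow_ofNat_inv_pow _ 2
  refine ⟨C ((-14617503129600 - 31701196800 * γ) ^ ((2 : ℂ)⁻¹)) *
      (X ^ 3 + C (-103/10 - γ/70) * X ^ 2 + C (-3014/63 - γ/35) * X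
        + C (5735/42 + 419 * γ / 882)), ?_⟩
  apply Polynomial.funext
  intro z
  simp only [eval_mul, eval_add, eval_sub, eval_pow, eval_C, eval_X, eval_ofNat]
  linear_combination
    (-4 * (420 * z ^ 3 - (119 + 9 * γ) * z ^ 2 + 14 * (1515 - γ) * z + 420 * (420 - γ)) *
        (z ^ 3 + (-103/10 - γ/70) * z ^ 2 + (-3014/63 - γ/35) * z
          + (5735/42 + 419 * γ / 882)) ^ 2) * hs2
    + (((-1023409350743911502135625:ℂ)/16) + ((2572545686761879366500:ℂ))*z + ((-12935019930606737623725:ℂ)/7)*z^2 + ((31377935794334676960:ℂ))*z^3 + ((96292961933888093661:ℂ)/2)*z^4 + ((-1299823347063381840:ℂ))*z^5 + ((869071054310758908:ℂ))*z^6 + ((2464276103493120:ℂ))*z^7 + ((-14553792442436625:ℂ))*z^8 + ((2316118141544623537125:ℂ)/8)*γ + ((-38244229177095277900:ℂ)/7)*γ*z + ((4080733799855153535:ℂ))*γ*z^2 + ((6184924748849664:ℂ))*γ*z^3 + ((-273145875140808081:ℂ)/2)*γ*z^4 + ((-364401909803520:ℂ))*γ*z^5 + ((43304213675520:ℂ))*γ*z^6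 + ((5344312296960:ℂ))*γ*z^7 + ((-873764236800:ℂ))*γ*z^8 + ((-393259111911892125:ℂ)/14)*γ^2 + ((-84715219719752700:ℂ)/7)*γ^2*z + ((424466100782560395:ℂ)/49)*γ^2*z^2 + ((-939170887608096:ℂ)/7)*γ^2*z^3 + ((-3173857495422939:ℂ)/14)*γ^2*z^4 + ((5323206891600:ℂ))*γ^2*z^5 + ((-3993608520252:ℂ))*γ^2*z^6 + ((66556260225:ℂ))*γ^2*z^8 + ((-10892347309423125:ℂ)/8)*γ^3 + ((25671700372500:ℂ))*γ^3*z + ((-19253775279375:ℂ))*γ^3*z^2 + ((1283585018625:ℂ)/2)*γ^3*z^4 + ((24754853930625:ℂ)/16)*γ^4) * hγ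
end

section
/- Let γ ∈ ℂ satisfy γ² = 212625. Then the cubic polynomial f := 420 x³ − (119 + 9γ) x² + 14(1515 − γ) x + 420(420 − γ) ∈ ℂ[x] is squarefree (has no repeated roots), so that the curve y² = f(x) is a smooth curve of genus 1. -/
open Polynomial

/-- For `γ² = 212625` (i.e. `γ = ±45√105`), the cubic
`f = 420x³ − (119+9γ)x² + 14(1515−γ)x + 420(420−γ)` is squarefree, so the curve
`y² = f(x)` is a smooth curve of genus `1`. -/
theorem stmt_11 (γ : ℂ) (hγ : γ ^ 2 = 212625) :
    Squarefree (C 420 * X ^ 3 - C (119 + 9 * γ) * X ^ 2 + C (14 * (1515 - γ)) * X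
      + C (420 * (420 - γ)) : Polynomial ℂ) := by
  set f : Polynomial ℂ := C 420 * X ^ 3 - C (119 + 9 * γ) * X ^ 2 + C (14 * (1515 - γ)) * X
      + C (420 * (420 - γ)) with hfdef
  set t : Polynomial ℂ := C γ with ht
  have hC : t ^ 2 = 212625 := by
    rw [ht, ← map_pow, hγ, map_ofNat]
  have hf : f = 420 * X ^ 3 - (119 + 9 * t) * X ^ 2 + 14 * (1515 - t) * X
      + 420 * (420 - t) := by
    simp only [hfdef, ht, C_add, C_mul, C_sub, map_ofNat]
  have hd : derivative f = 1260 * X ^ 2 - (238 + 18 * t) * X + 14 * (1515 - t) := by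
    rw [hfdef]
    simp only [derivative_add, derivative_sub, derivative_C_mul, derivative_X_pow,
      derivative_X, derivative_C]
    simp only [ht, C_add, C_mul, C_sub, map_ofNat, map_natCast, Nat.cast_ofNat]
    push_cast
    ring
  set u : Polynomial ℂ :=
    (10827324553500 + 23478696424 * t) + (-2960639403750 - 6420563730 * t) * X with hu
  set v : Polynomial ℂ :=
    (12682210338000 + 27505196040 * t) + (-6952723887375 - 15077502437 * t) * X
      + (986879801250 + 2140187910 * t) * X ^ 2 with hv
  have key : u * f + v * derivative f = 347352790050000 := by
    rw [hd, hf, hu, hv]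
    linear_combination (-10246125242640 + 2083926522062 * X + 120012037530 * X ^ 2
      + 19261691190 * X ^ 3) * hC
  have hiscop : IsCoprime f (derivative f) := by
    refine ⟨C ((347352790050000 : ℂ)⁻¹) * u, C ((347352790050000 : ℂ)⁻¹) * v, ?_⟩
    have h2 : C ((347352790050000 : ℂ)⁻¹) * u * f + C ((347352790050000 : ℂ)⁻¹) * v
        * derivative f = C ((347352790050000 : ℂ)⁻¹) * (u * f + v * derivative f) := by
      ring
    rw [h2, key, show ((347352790050000 : Polynomial ℂ)) = C (347352790050000 : ℂ) from
      (map_ofNat C _).symm, ← C_mul, inv_mul_cancel₀ (by norm_num), C_1]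
  exact ((separable_def f).mpr hiscop).squarefree
end
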